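/- Let ℓ, q, k ∈ ℂ and let I ⊆ F be the two-sided ideal generated by the three elements x₂x₁ − x₁x₂ − ℓ x₁², x₃x₁ − x₁x₃ + q x₁², and x₃x₂ − x₂x₃ + ℓ x₁x₃ + q x₁x₂ + (k − qℓ) x₁². Then the images in F/I of the monomials x₁^{a₁} x₂^{a₂} x₃^{a₃}, over all a₁, a₂, a₃ ∈ ℕ, form a ℂ-basis of F/I. (This quotient is the Nichols algebra associated to the braiding of type R_{1,5} with t = 1 and p = 2q; it has Gelfand–Kirillov dimension 3.) -/

import Mathlib

/-!
The relations rewrite each product `xⱼ xᵢ` with `j > i` into ordered words, so the span of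
the ordered monomials `x₁^a x₂^b x₃^c` is stable under left multiplication by the generators;
since it contains `1`, it is all of `F/I`. The same rewriting gives explicit formulas for left
multiplication by `x₁, x₂, x₃` on the free module with basis `ℕ³`. These operators satisfy the
three relations, so `F/I` acts on that module, and an ordered monomial sends the basis vector
`(0, 0, 0)` to the basis vector of its exponent; this proves linear independence.
-/

/-- The free associative unital `ℂ`-algebra on three generators. -/
abbrev F : Type := FreeAlgebra ℂ (Fin 3)

/-- The generators `x₁ = X 0`, `x₂ = X 1`, `x₃ = X 2`. -/
noncomputable def X (i : Fin 3) : F := FreeAlgebra.ι ℂ i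

/-- Generators: `x₂x₁ − x₁x₂ − ℓ x₁²`, `x₃x₁ − x₁x₃ + q x₁²`, `x₃x₂ − x₂x₃ + ℓ x₁x₃ + q x₁x₂ + (k − qℓ) x₁²`. -/
noncomputable def S (l q k : ℂ) : Set F :=
  {X 1 * X 0 - X 0 * X 1 - l • (X 0 * X 0),
   X 2 * X 0 - X 0 * X 2 + q • (X 0 * X 0),
   X 2 * X 1 - X 1 * X 2 + l • (X 0 * X 2) + q • (X 0 * X 1) + (k - q * l) • (X 0 * X 0)}

/-- The relation whose two-sided-ideal closure is the ideal generated by `S`;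
`RingQuot rel` is the quotient `F/I`. -/
def rel (l q k : ℂ) : F → F → Prop := fun x y => x ∈ S l q k ∧ y = 0

open Finsupp Submodule Set

namespace NicholsR15

section Relations

variable {R A : Type*} [CommRing R] [Ring A] [Algebra R A]

theorem mul_pow_eq_of_mul_eq {x y : A} {c : R} (h : y * x = x * y + c • (x * x)) (n : ℕ) :
    y * x ^ n = x ^ n * y + ((n : R) * c) • x ^ (n + 1) := by
  induction n with
  | zero => simp
  | succ n ih =>
    calc y * x ^ (n + 1) = x ^ n * (y * x) + ((n : R) * c) • x ^ (n + 2) := by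
          rw [pow_succ, ← mul_assoc, ih, add_mul, smul_mul_assoc, mul_assoc, ← pow_succ]
      _ = x ^ (n + 1) * y + (((n + 1 : ℕ) : R) * c) • x ^ (n + 2) := by
          rw [h, mul_add, mul_smul_comm, ← mul_assoc, ← pow_succ, ← mul_assoc, ← pow_succ,
            ← pow_succ]
          push_cast
          module

theorem mul_mem_span_range {ι : Type*} {v : ι → A} {x : A}
    (h : ∀ i, x * v i ∈ span R (range v)) {w : A} (hw : w ∈ span R (range v)) :
    x * w ∈ span R (range v) :=
  (span_le (p := (span R (range v)).comap (LinearMap.mulLeft R x))).mpr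
    (Set.range_subset_iff.mpr h) hw

theorem eq_top_of_one_mem_of_mul_mem {s : Set A} (hs : Algebra.adjoin R s = ⊤)
    {W : Submodule R A} (h1 : 1 ∈ W) (hmul : ∀ x ∈ s, ∀ w ∈ W, x * w ∈ W) : W = ⊤ := by
  suffices h : ∀ x ∈ Algebra.adjoin R s, ∀ w ∈ W, x * w ∈ W by
    refine eq_top_iff.mpr fun x _ => ?_
    simpa using h x (hs ▸ Algebra.mem_top) 1 h1
  intro x hx
  induction hx using Algebra.adjoin_induction with
  | mem x hx => exact hmul x hx
  | algebraMap r => exact fun w hw => by simpa [Algebra.smul_def] using W.smul_mem r hw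
  | add x y _ _ hx hy => exact fun w hw => by simpa [add_mul] using add_mem (hx w hw) (hy w hw)
  | mul x y _ _ hx hy => exact fun w hw => by simpa [mul_assoc] using hx _ (hy w hw)

structure IsRelTriple (l q k : R) (y : Fin 3 → A) : Prop where
  mul_10 : y 1 * y 0 = y 0 * y 1 + l • (y 0 * y 0)
  mul_20 : y 2 * y 0 = y 0 * y 2 - q • (y 0 * y 0)
  mul_21 : y 2 * y 1 =
    y 1 * y 2 - l • (y 0 * y 2) - q • (y 0 * y 1) - (k - q * l) • (y 0 * y 0)

def orderedMonomial (y : Fin 3 → A) (e : ℕ × ℕ × ℕ) : A :=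
  y 0 ^ e.1 * y 1 ^ e.2.1 * y 2 ^ e.2.2

theorem map_orderedMonomial {B : Type*} [Ring B] [Algebra R B] (f : A →ₐ[R] B)
    (y : Fin 3 → A) (e : ℕ × ℕ × ℕ) :
    f (orderedMonomial y e) = orderedMonomial (fun i => f (y i)) e := by
  simp only [orderedMonomial, map_mul, map_pow]

variable {y : Fin 3 → A}

theorem orderedMonomial_mem_span (e : ℕ × ℕ × ℕ) :
    orderedMonomial y e ∈ span R (range (orderedMonomial y)) :=
  subset_span ⟨e, rfl⟩

theorem mul_orderedMonomial_zero (a b c : ℕ) :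
    y 0 * orderedMonomial y (a, b, c) = orderedMonomial y (a + 1, b, c) := by
  simp only [orderedMonomial, ← mul_assoc, ← pow_succ']

theorem gen0_mul_mem_span {w : A} (hw : w ∈ span R (range (orderedMonomial y))) :
    y 0 * w ∈ span R (range (orderedMonomial y)) :=
  mul_mem_span_range (fun ⟨a, b, c⟩ => by
    rw [mul_orderedMonomial_zero]; exact orderedMonomial_mem_span _) hw

theorem gen0_pow_mul_mem_span (n : ℕ) {w : A}
    (hw : w ∈ span R (range (orderedMonomial y))) :
    y 0 ^ n * w ∈ span R (range (orderedMonomial y)) := by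
  induction n with
  | zero => simpa using hw
  | succ n ih => simpa [pow_succ', mul_assoc] using gen0_mul_mem_span ih

namespace IsRelTriple

variable {l q k : R} (hy : IsRelTriple l q k y)
include hy

theorem mul_orderedMonomial_one (a b c : ℕ) :
    y 1 * orderedMonomial y (a, b, c) =
      orderedMonomial y (a, b + 1, c) + ((a : R) * l) • orderedMonomial y (a + 1, b, c) := by
  simp only [orderedMonomial]
  rw [mul_assoc, mul_assoc, ← mul_assoc (y 1), mul_pow_eq_of_mul_eq hy.mul_10, add_mul,
    smul_mul_assoc, mul_assoc, ← mul_assoc (y 1), ← pow_succ']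
  simp only [mul_assoc]

theorem gen1_mul_mem_span {w : A} (hw : w ∈ span R (range (orderedMonomial y))) :
    y 1 * w ∈ span R (range (orderedMonomial y)) :=
  mul_mem_span_range (fun ⟨a, b, c⟩ => by
    rw [hy.mul_orderedMonomial_one]
    exact add_mem (orderedMonomial_mem_span _) (smul_mem _ _ (orderedMonomial_mem_span _))) hw

theorem mul_orderedMonomial_two (a b c : ℕ) :
    y 2 * orderedMonomial y (a, b, c) =
      y 0 ^ a * (y 2 * (y 1 ^ b * y 2 ^ c))
        - ((a : R) * q) • orderedMonomial y (a + 1, b, c) := by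
  have h20 : y 2 * y 0 = y 0 * y 2 + (-q) • (y 0 * y 0) := by
    rw [hy.mul_20, neg_smul, sub_eq_add_neg]
  simp only [orderedMonomial]
  rw [mul_assoc, mul_assoc, ← mul_assoc (y 2), mul_pow_eq_of_mul_eq h20, add_mul,
    smul_mul_assoc, mul_neg, neg_smul, ← sub_eq_add_neg]
  simp only [mul_assoc]

theorem gen2_mul_pow_mul_pow_mem_span (b c : ℕ) :
    y 2 * (y 1 ^ b * y 2 ^ c) ∈ span R (range (orderedMonomial y)) := by
  have hm (b c : ℕ) : y 1 ^ b * y 2 ^ c ∈ span R (range (orderedMonomial y)) := by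
    simpa [orderedMonomial] using orderedMonomial_mem_span (R := R) (y := y) (0, b, c)
  induction b with
  | zero => simpa [← pow_succ'] using hm 0 (c + 1)
  | succ b ih =>
    rw [pow_succ', mul_assoc, ← mul_assoc, hy.mul_21]
    simp only [sub_mul, smul_mul_assoc, mul_assoc]
    exact sub_mem (sub_mem (sub_mem (hy.gen1_mul_mem_span ih)
      (smul_mem _ _ (gen0_mul_mem_span ih)))
      (smul_mem _ _ (gen0_mul_mem_span (hy.gen1_mul_mem_span (hm b c)))))
      (smul_mem _ _ (gen0_mul_mem_span (gen0_mul_mem_span (hm b c))))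

theorem gen2_mul_mem_span {w : A} (hw : w ∈ span R (range (orderedMonomial y))) :
    y 2 * w ∈ span R (range (orderedMonomial y)) := by
  refine mul_mem_span_range (fun ⟨a, b, c⟩ => ?_) hw
  rw [hy.mul_orderedMonomial_two]
  exact sub_mem (gen0_pow_mul_mem_span a (hy.gen2_mul_pow_mul_pow_mem_span b c))
    (smul_mem _ _ (orderedMonomial_mem_span _))

theorem span_orderedMonomial_eq_top (hgen : Algebra.adjoin R (range y) = ⊤) :
    span R (range (orderedMonomial y)) = ⊤ := by
  refine eq_top_of_one_mem_of_mul_mem hgen ?_ ?_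
  · simpa [orderedMonomial] using orderedMonomial_mem_span (y := y) (R := R) (0, 0, 0)
  · rintro _ ⟨i, rfl⟩ w hw
    fin_cases i
    exacts [gen0_mul_mem_span hw, hy.gen1_mul_mem_span hw, hy.gen2_mul_mem_span hw]

end IsRelTriple

end Relations

noncomputable section Representation

variable {R : Type*} [CommRing R] (l q k : R)

local notation "V" => ℕ × ℕ × ℕ →₀ R

def pbw (a b c : ℕ) : V := single (a, b, c) 1

theorem endomorphism_ext_pbw {f g : Module.End R V}
    (h : ∀ a b c, f (pbw a b c) = g (pbw a b c)) : f = g :=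
  Finsupp.basisSingleOne.ext fun ⟨a, b, c⟩ => by simpa [pbw] using h a b c

-- `pbw a b c` stands for `x₁^a x₂^b x₃^c`, and `leftMul i` for left multiplication by `X i`
-- in these coordinates, read off from `x₂ x₁^a = x₁^a x₂ + a ℓ x₁^(a+1)` and
-- `x₃ x₁^a = x₁^a x₃ - a q x₁^(a+1)`.
def leftMul0 : Module.End R V :=
  linearCombination R fun e => pbw (e.1 + 1) e.2.1 e.2.2

def leftMul1 : Module.End R V :=
  linearCombination R fun e =>
    pbw e.1 (e.2.1 + 1) e.2.2 + ((e.1 : R) * l) • pbw (e.1 + 1) e.2.1 e.2.2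

-- `x₃ · x₂^b x₃^c`, computed by rewriting `x₃ x₂` with the third relation.
def leftMul2Tail : ℕ → ℕ → V
  | 0, c => pbw 0 0 (c + 1)
  | b + 1, c => leftMul1 l (leftMul2Tail b c) - l • leftMul0 (leftMul2Tail b c)
      - q • pbw 1 (b + 1) c - (k - q * l) • pbw 2 b c

def leftMul2 : Module.End R V :=
  linearCombination R fun e =>
    (leftMul0 ^ e.1) (leftMul2Tail l q k e.2.1 e.2.2)
      - ((e.1 : R) * q) • pbw (e.1 + 1) e.2.1 e.2.2

theorem leftMul0_pbw (a b c : ℕ) : leftMul0 (pbw a b c : V) = pbw (a + 1) b c := by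
  rw [leftMul0, pbw, linearCombination_single, one_smul]

theorem leftMul1_pbw (a b c : ℕ) :
    leftMul1 l (pbw a b c) = pbw a (b + 1) c + ((a : R) * l) • pbw (a + 1) b c := by
  rw [leftMul1, pbw, linearCombination_single, one_smul]

theorem leftMul2_pbw (a b c : ℕ) :
    leftMul2 l q k (pbw a b c) =
      (leftMul0 ^ a) (leftMul2Tail l q k b c) - ((a : R) * q) • pbw (a + 1) b c := by
  rw [leftMul2, pbw, linearCombination_single, one_smul]

theorem leftMul0_pow_pbw (n a b c : ℕ) :
    (leftMul0 ^ n) (pbw a b c : V) = pbw (n + a) b c := by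
  induction n with
  | zero => simp
  | succ n ih => rw [pow_succ', Module.End.mul_apply, ih, leftMul0_pbw, Nat.add_right_comm]

theorem leftMul0_leftMul0_pow (n : ℕ) (v : V) :
    leftMul0 ((leftMul0 ^ n) v) = (leftMul0 ^ (n + 1)) v := by
  rw [pow_succ', Module.End.mul_apply]

theorem leftMul0_pow_leftMul0 (n : ℕ) (v : V) :
    (leftMul0 ^ n) (leftMul0 v) = (leftMul0 ^ (n + 1)) v := by
  rw [pow_succ, Module.End.mul_apply]

theorem leftMul1_mul_leftMul0 :
    leftMul1 l * leftMul0 = leftMul0 * leftMul1 l + l • (leftMul0 * leftMul0) := by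
  refine endomorphism_ext_pbw fun a b c => ?_
  simp only [Module.End.mul_apply, LinearMap.add_apply, LinearMap.smul_apply, leftMul0_pbw,
    leftMul1_pbw, map_add, map_smul]
  push_cast
  module

theorem leftMul2_mul_leftMul0 :
    leftMul2 l q k * leftMul0 = leftMul0 * leftMul2 l q k - q • (leftMul0 * leftMul0) := by
  refine endomorphism_ext_pbw fun a b c => ?_
  simp only [Module.End.mul_apply, LinearMap.sub_apply, LinearMap.smul_apply, leftMul0_pbw,
    leftMul2_pbw, map_sub, map_smul, leftMul0_leftMul0_pow]
  push_cast
  module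

theorem leftMul2_mul_leftMul1 :
    leftMul2 l q k * leftMul1 l = leftMul1 l * leftMul2 l q k - l • (leftMul0 * leftMul2 l q k)
      - q • (leftMul0 * leftMul1 l) - (k - q * l) • (leftMul0 * leftMul0) := by
  refine endomorphism_ext_pbw fun a b c => ?_
  have hcomm (v : V) : (leftMul0 ^ a) (leftMul1 l v) =
      leftMul1 l ((leftMul0 ^ a) v) - ((a : R) * l) • (leftMul0 ^ (a + 1)) v := by
    have h := congrArg (· v)
      (mul_pow_eq_of_mul_eq (A := Module.End R V) (leftMul1_mul_leftMul0 l) a)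
    simp only [Module.End.mul_apply, LinearMap.add_apply, LinearMap.smul_apply] at h
    exact eq_sub_of_add_eq h.symm
  simp only [Module.End.mul_apply, LinearMap.sub_apply, LinearMap.smul_apply, leftMul0_pbw,
    leftMul1_pbw, leftMul2_pbw, map_add, map_sub, map_smul, leftMul0_leftMul0_pow, leftMul2Tail,
    hcomm, leftMul0_pow_pbw, leftMul0_pow_leftMul0]
  simp only [add_assoc, Nat.reduceAdd]
  push_cast
  module

theorem isRelTriple_leftMul : IsRelTriple l q k ![leftMul0, leftMul1 l, leftMul2 l q k] :=
  ⟨leftMul1_mul_leftMul0 l, leftMul2_mul_leftMul0 l q k, leftMul2_mul_leftMul1 l q k⟩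

theorem orderedMonomial_leftMul_pbw_zero (e : ℕ × ℕ × ℕ) :
    orderedMonomial ![leftMul0, leftMul1 l, leftMul2 l q k] e (pbw 0 0 0) = single e 1 := by
  obtain ⟨a, b, c⟩ := e
  have h2 : ((leftMul2 l q k) ^ c) (pbw 0 0 0) = pbw 0 0 c := by
    induction c with
    | zero => simp
    | succ c ih => simp [pow_succ', ih, leftMul2_pbw, leftMul2Tail]
  have h1 : ((leftMul1 l) ^ b) (pbw 0 0 c) = pbw 0 b c := by
    induction b with
    | zero => simp
    | succ b ih => simp [pow_succ', ih, leftMul1_pbw]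
  change (leftMul0 ^ a * leftMul1 l ^ b * leftMul2 l q k ^ c : Module.End R V)
    (pbw 0 0 0) = pbw a b c
  rw [Module.End.mul_apply, Module.End.mul_apply, h2, h1, leftMul0_pow_pbw, add_zero]

end Representation

section Quotient

variable (l q k : ℂ) {A : Type*} [Ring A] [Algebra ℂ A]

theorem isRelTriple_iff_map_eq_zero (f : F →ₐ[ℂ] A) :
    IsRelTriple l q k (fun i => f (X i)) ↔ ∀ x ∈ S l q k, f x = 0 := by
  simp only [S, mem_insert_iff, mem_singleton_iff, forall_eq_or_imp, forall_eq, map_sub, map_add,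
    map_smul, map_mul]
  constructor
  · rintro ⟨h10, h20, h21⟩
    refine ⟨?_, ?_, ?_⟩
    · rw [h10]; abel
    · rw [h20]; abel
    · rw [h21]; abel
  · rintro ⟨h10, h20, h21⟩
    refine ⟨eq_of_sub_eq_zero ?_, eq_of_sub_eq_zero ?_, eq_of_sub_eq_zero ?_⟩
    · rw [← h10]; abel
    · rw [← h20]; abel
    · rw [← h21]; abel

def liftOfIsRelTriple {y : Fin 3 → A} (hy : IsRelTriple l q k y) :
    RingQuot (rel l q k) →ₐ[ℂ] A :=
  RingQuot.liftAlgHom ℂ ⟨FreeAlgebra.lift ℂ y, by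
    rintro x _ ⟨hx, rfl⟩
    rw [map_zero]
    exact (isRelTriple_iff_map_eq_zero l q k _).mp (by simpa [X] using hy) x hx⟩

theorem liftOfIsRelTriple_mk_X {y : Fin 3 → A} (hy : IsRelTriple l q k y) (i : Fin 3) :
    liftOfIsRelTriple l q k hy (RingQuot.mkAlgHom ℂ (rel l q k) (X i)) = y i := by
  simp [liftOfIsRelTriple, RingQuot.liftAlgHom_mkAlgHom_apply, X]

theorem isRelTriple_mk_X : IsRelTriple l q k (fun i => RingQuot.mkAlgHom ℂ (rel l q k) (X i)) :=
  (isRelTriple_iff_map_eq_zero l q k _).mpr fun x hx => by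
    simpa using RingQuot.mkAlgHom_rel ℂ (show rel l q k x 0 from ⟨hx, rfl⟩)

theorem adjoin_range_mk_X :
    Algebra.adjoin ℂ (range fun i => RingQuot.mkAlgHom ℂ (rel l q k) (X i)) = ⊤ := by
  have h : (range fun i => RingQuot.mkAlgHom ℂ (rel l q k) (X i)) =
      RingQuot.mkAlgHom ℂ (rel l q k) '' range (FreeAlgebra.ι ℂ) := by
    rw [← range_comp]; rfl
  rw [h, ← AlgHom.map_adjoin, FreeAlgebra.adjoin_range_ι, Algebra.map_top,
    AlgHom.range_eq_top]
  exact RingQuot.mkAlgHom_surjective ℂ (rel l q k)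

theorem linearIndependent_orderedMonomial_mk_X :
    LinearIndependent ℂ (orderedMonomial fun i => RingQuot.mkAlgHom ℂ (rel l q k) (X i)) := by
  let φ := liftOfIsRelTriple l q k (isRelTriple_leftMul l q k)
  refine LinearIndependent.of_comp ((LinearMap.applyₗ (pbw 0 0 0)).comp φ.toLinearMap) ?_
  convert (Finsupp.basisSingleOne : Module.Basis (ℕ × ℕ × ℕ) ℂ _).linearIndependent
  ext1 e
  simp [φ, map_orderedMonomial, liftOfIsRelTriple_mk_X, orderedMonomial_leftMul_pbw_zero]

end Quotient

end NicholsR15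

open NicholsR15 in
/-- the images in `F/I` of the monomials `x₁^{a₁} x₂^{a₂} x₃^{a₃}` form a `ℂ`-basis. -/
theorem basis_R15_t_one (l q k : ℂ) :
    LinearIndependent ℂ (fun e : ℕ × ℕ × ℕ =>
      RingQuot.mkAlgHom ℂ (rel l q k) (X 0 ^ e.1 * X 1 ^ e.2.1 * X 2 ^ e.2.2)) ∧
    Submodule.span ℂ (Set.range (fun e : ℕ × ℕ × ℕ =>
      RingQuot.mkAlgHom ℂ (rel l q k) (X 0 ^ e.1 * X 1 ^ e.2.1 * X 2 ^ e.2.2))) = ⊤ := by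
  have hmono : (fun e : ℕ × ℕ × ℕ =>
      RingQuot.mkAlgHom ℂ (rel l q k) (X 0 ^ e.1 * X 1 ^ e.2.1 * X 2 ^ e.2.2)) =
      orderedMonomial fun i => RingQuot.mkAlgHom ℂ (rel l q k) (X i) := by
    ext1 e
    simp only [orderedMonomial, map_mul, map_pow]
  rw [hmono]
  exact ⟨linearIndependent_orderedMonomial_mk_X l q k,
    (isRelTriple_mk_X l q k).span_orderedMonomial_eq_top (adjoin_range_mk_X l q k)⟩
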